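/- Let M be a popular matching of a CHA instance I with switching graph G_M and unsaturation function u_M(h) = c(h) − |M(h)|. Then no edge of weight +1 in G_M ends at an unsaturated vertex, i.e., every edge of weight +1 ends at a vertex h with u_M(h) = 0. -/

import Mathlib

/-- A Capacitated House Allocation (CHA) instance: agents `A`, houses `H`, a capacity
function `cap : H → ℤ_{>0}`, and for each agent a strict preference order (lower rank
means more preferred) over its adjacent houses, augmented with a unique last-resort
house `l(a)` of capacity `1` and lowest preference, appearing only on `a`'s list. -/
structure CHAInstance (A H : Type*) where
  adj : A → H → Prop
  rank : A → H → ℕ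
  rank_strict : ∀ a h h', adj a h → adj a h' → rank a h = rank a h' → h = h'
  cap : H → ℕ
  cap_pos : ∀ h, 0 < cap h
  lastResort : A → H
  lastResort_injective : Function.Injective lastResort
  lastResort_adj : ∀ a, adj a (lastResort a)
  lastResort_worst : ∀ a h, adj a h → h ≠ lastResort a → rank a h < rank a (lastResort a)
  lastResort_only : ∀ a a', adj a' (lastResort a) → a' = a
  lastResort_cap : ∀ a, cap (lastResort a) = 1

namespace CHAInstance

variable {A H : Type*}

/-- A matching of the CHA instance `I`: each agent is matched to at most one adjacent
house, and each house `h` is matched to at most `cap h` agents. -/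
def IsMatching (I : CHAInstance A H) (M : Set (A × H)) : Prop :=
  (∀ p ∈ M, I.adj p.1 p.2) ∧ (∀ p ∈ M, ∀ q ∈ M, p.1 = q.1 → p = q) ∧
    (∀ h : H, {a | (a, h) ∈ M}.ncard ≤ I.cap h)

/-- Agent `a` prefers matching `M` to matching `M'`: `a` is matched in `M` and either
unmatched in `M'`, or strictly prefers its house in `M` to its house in `M'`. -/
def Prefers (I : CHAInstance A H) (M M' : Set (A × H)) (a : A) : Prop :=
  ∃ h, (a, h) ∈ M ∧ ∀ h', (a, h') ∈ M' → I.rank a h < I.rank a h'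

/-- `M` is more popular than `M'`. -/
def MorePopular [Fintype A] (I : CHAInstance A H) (M M' : Set (A × H)) : Prop :=
  Nat.card {a | Prefers I M M' a} > Nat.card {a | Prefers I M' M a}

/-- `M` is a popular matching of `I`. -/
def IsPopular [Fintype A] (I : CHAInstance A H) (M : Set (A × H)) : Prop :=
  I.IsMatching M ∧ ∀ M', I.IsMatching M' → ¬ MorePopular I M' M

/-- `h = f(a)`: house `h` is the (unique) first choice of agent `a`. -/
def IsFirstChoice (I : CHAInstance A H) (a : A) (h : H) : Prop :=
  I.adj a h ∧ ∀ h', I.adj a h' → I.rank a h ≤ I.rank a h'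

/-- `f(h)`: the set of agents whose first choice is `h`. -/
def fSet (I : CHAInstance A H) (h : H) : Set A := {a | IsFirstChoice I a h}

/-- `h` is an `f`-house if it is the first choice of some agent. -/
def IsFHouse (I : CHAInstance A H) (h : H) : Prop := ∃ a, IsFirstChoice I a h

/-- The defining condition for `s(a)`: `h` is not an `f`-house, or `h` is an `f`-house
with `h ≠ f(a)` and `|f(h)| < c(h)`. -/
def SCond (I : CHAInstance A H) (a : A) (h : H) : Prop :=
  ¬ IsFHouse I h ∨ (¬ IsFirstChoice I a h ∧ (fSet I h).ncard < I.cap h)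

/-- `h = s(a)`: house `h` is the highest-ranked house on `a`'s preference list
satisfying `SCond`. -/
def IsSecondChoice (I : CHAInstance A H) (a : A) (h : H) : Prop :=
  I.adj a h ∧ SCond I a h ∧ ∀ h', I.adj a h' → SCond I a h' → I.rank a h ≤ I.rank a h'

/-- The switching graph `G_M` of `I` with respect to a popular matching `M`:
`SwEdge I M a src tgt w` says that agent `a` contributes the directed edge from
`src = M(a)` to `tgt`, the other element of `{f(a), s(a)}`, with weight
`w = -1` if `M(a) = f(a)` and `w = +1` otherwise. -/
def SwEdge (I : CHAInstance A H) (M : Set (A × H)) (a : A) (src tgt : H) (w : ℤ) :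
    Prop :=
  (a, src) ∈ M ∧
    ((IsFirstChoice I a src ∧ IsSecondChoice I a tgt ∧ w = -1) ∨
     (IsSecondChoice I a src ∧ IsFirstChoice I a tgt ∧ w = 1))

/-- The unsaturation degree `u_M(h) = c(h) - |M(h)|` of a house `h`. -/
noncomputable def unsatDeg (I : CHAInstance A H) (M : Set (A × H)) (h : H) : ℕ :=
  I.cap h - {a | (a, h) ∈ M}.ncard

/-- A house is saturated if its unsaturation degree is `0`. -/
def Saturated (I : CHAInstance A H) (M : Set (A × H)) (h : H) : Prop :=
  unsatDeg I M h = 0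

end CHAInstance


/-!
If an agent `a` matched to `s(a)` could move to its strictly preferred first choice `f(a)`
because `f(a)` still has spare capacity, the move would make `a` better off and leave every
other agent's house unchanged, so the new matching would be more popular than `M`.
-/

namespace CHAInstance

variable {A H : Type*} {I : CHAInstance A H}

def reassign (M : Set (A × H)) (a : A) (h : H) : Set (A × H) :=
  insert (a, h) {p ∈ M | p.1 ≠ a}

section reassign

variable {M : Set (A × H)} {a b : A} {h x : H}

theorem mem_reassign_self_iff : (a, x) ∈ reassign M a h ↔ x = h := by
  simp [reassign]

theorem mem_reassign_of_ne (hb : b ≠ a) : (b, x) ∈ reassign M a h ↔ (b, x) ∈ M := by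
  simp [reassign, hb]

theorem IsMatching.reassign [Finite A] (hM : I.IsMatching M) (hadj : I.adj a h)
    (hfree : {b | (b, h) ∈ M}.ncard < I.cap h) : I.IsMatching (reassign M a h) := by
  obtain ⟨hMadj, hMuniq, hMcap⟩ := hM
  refine ⟨?_, ?_, fun x => ?_⟩
  · rintro p (rfl | ⟨hp, -⟩)
    exacts [hadj, hMadj p hp]
  · rintro p (rfl | ⟨hp, hpa⟩) q (rfl | ⟨hq, hqa⟩) hpq
    exacts [rfl, absurd hpq.symm hqa, absurd hpq hpa, hMuniq p hp q hq hpq]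
  · by_cases hx : x = h
    · subst hx
      have hsub : {b | (b, x) ∈ CHAInstance.reassign M a x} ⊆ insert a {b | (b, x) ∈ M} := by
        rintro b (hb | ⟨hb, -⟩)
        exacts [Or.inl (Prod.ext_iff.1 hb).1, Or.inr hb]
      calc {b | (b, x) ∈ CHAInstance.reassign M a x}.ncard
          ≤ (insert a {b | (b, x) ∈ M}).ncard := Set.ncard_le_ncard hsub
        _ ≤ {b | (b, x) ∈ M}.ncard + 1 := Set.ncard_insert_le _ _
        _ ≤ I.cap x := hfree
    · have hsub : {b | (b, x) ∈ CHAInstance.reassign M a h} ⊆ {b | (b, x) ∈ M} := by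
        rintro b (hb | ⟨hb, -⟩)
        exacts [absurd (Prod.ext_iff.1 hb).2 hx, hb]
      exact (Set.ncard_le_ncard hsub).trans (hMcap x)

end reassign

theorem morePopular_of_pareto [Fintype A] {M M' : Set (A × H)} {a : A}
    (hnone : ∀ b, ¬ I.Prefers M M' b) (ha : I.Prefers M' M a) : I.MorePopular M' M := by
  have hworse : {b | I.Prefers M M' b} = ∅ := Set.eq_empty_of_forall_notMem hnone
  have hbetter : Nonempty {b | I.Prefers M' M b} := ⟨⟨a, ha⟩⟩
  rw [MorePopular, hworse, gt_iff_lt, Nat.card_of_isEmpty]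
  exact Nat.card_pos

theorem IsPopular.saturated_of_rank_lt [Fintype A] {M : Set (A × H)} (hM : I.IsPopular M)
    {a : A} {h h' : H} (hah : (a, h) ∈ M) (hadj : I.adj a h') (hlt : I.rank a h' < I.rank a h) :
    I.Saturated M h' := by
  obtain ⟨hmatch, hpop⟩ := hM
  by_contra hunsat
  have hfree : {b | (b, h') ∈ M}.ncard < I.cap h' := by
    have := hmatch.2.2 h'
    unfold Saturated unsatDeg at hunsat
    omega
  have hhouse : ∀ x, (a, x) ∈ M → x = h := fun x hx =>
    (Prod.ext_iff.1 (hmatch.2.1 _ hx _ hah rfl)).2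
  refine hpop _ (hmatch.reassign hadj hfree) (morePopular_of_pareto (a := a) ?_ ?_)
  · rintro b ⟨x, hbx, hbetter⟩
    by_cases hb : b = a
    · subst hb
      have := hbetter h' (mem_reassign_self_iff.2 rfl)
      rw [hhouse x hbx] at this
      omega
    · exact (hbetter x ((mem_reassign_of_ne hb).2 hbx)).false
  · exact ⟨h', mem_reassign_self_iff.2 rfl, fun x hx => hhouse x hx ▸ hlt⟩

variable {a : A} {h f : H}

theorem IsSecondChoice.ne_of_isFirstChoice (hs : I.IsSecondChoice a h)
    (hf : I.IsFirstChoice a f) : h ≠ f := by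
  rintro rfl
  rcases hs.2.1 with hnotF | ⟨hnotFirst, -⟩
  exacts [hnotF ⟨a, hf⟩, hnotFirst hf]

theorem IsFirstChoice.rank_lt (hf : I.IsFirstChoice a f) (hadj : I.adj a h) (hne : h ≠ f) :
    I.rank a f < I.rank a h :=
  (hf.2 h hadj).lt_of_ne fun heq => hne (I.rank_strict a f h hf.1 hadj heq).symm

end CHAInstance

open CHAInstance in
theorem switchingGraph_plusOne_ends_saturated_general
    {A H : Type*} [Fintype A] (I : CHAInstance A H)
    (M : Set (A × H)) (hM : IsPopular I M)
    (a : A) (src tgt : H) (he : SwEdge I M a src tgt 1) :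
    Saturated I M tgt := by
  obtain ⟨hsrc, hcase⟩ := he
  obtain ⟨hs, hf⟩ : I.IsSecondChoice a src ∧ I.IsFirstChoice a tgt := by
    rcases hcase with ⟨-, -, hw⟩ | ⟨hs, hf, -⟩
    exacts [absurd hw (by norm_num), ⟨hs, hf⟩]
  exact hM.saturated_of_rank_lt hsrc hf.1 (hf.rank_lt hs.1 (hs.ne_of_isFirstChoice hf))

open CHAInstance in
/-- Property 3: in the switching graph of a CHA instance with respect to
a popular matching `M`, no edge of weight `+1` ends at an unsaturated vertex, i.e.
every `+1`-edge ends at a vertex `h` with `u_M(h) = 0`. -/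
theorem switchingGraph_plusOne_ends_saturated
    {A H : Type*} [Fintype A] [Fintype H] (I : CHAInstance A H)
    (M : Set (A × H)) (hM : IsPopular I M)
    (a : A) (src tgt : H) (he : SwEdge I M a src tgt 1) :
    Saturated I M tgt :=
  switchingGraph_plusOne_ends_saturated_general I M hM a src tgt he
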